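/- Online gradient descent regret bound: let Δ ⊆ ℝ^K be a closed convex set of diameter at most √2 (more precisely, ‖p₁ − p‖² ≤ 2 for all p ∈ Δ). Suppose ℓ_t : Δ → ℝ are convex and differentiable with ‖∇ℓ_t(p)‖ ≤ L for all p and t. Run p_{t+1} = Proj_Δ(p_t − η ∇ℓ_t(p_t)) with η = √(2/T)/L. Then (1/T)∑_{t=1}^T ℓ_t(p_t) − min_{p∈Δ} (1/T)∑_{t=1}^T ℓ_t(p) ≤ √(2/T)·L. -/

import Mathlib

open scoped RealInnerProductSpace

/-!
Each projected gradient step is nonexpansive towards any comparator `q ∈ Δ`, so expanding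
`‖p_t - η g_t - q‖²` gives `2η ⟪p_t - q, g_t⟫ ≤ ‖p_t - q‖² - ‖p_{t+1} - q‖² + η² L²`. By
convexity the left side dominates `2η (ℓ_t(p_t) - ℓ_t(q))`; summing, the distances telescope,
so `2η · regret ≤ ‖p_1 - q‖² + T η² L² ≤ 2 + T η² L²`, and `η = √(2/T)/L` balances the two terms.
-/

section OnlineGradientDescent

variable {E : Type*} [NormedAddCommGroup E] [InnerProductSpace ℝ E]

theorem norm_sub_smul_sub_sq (x g q : E) (η : ℝ) :
    ‖x - η • g - q‖ ^ 2 = ‖x - q‖ ^ 2 - 2 * η * ⟪x - q, g⟫ + η ^ 2 * ‖g‖ ^ 2 := by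
  rw [sub_right_comm, norm_sub_sq_real, real_inner_smul_right, norm_smul, mul_pow,
    Real.norm_eq_abs, sq_abs]
  ring

theorem two_mul_inner_le_of_norm_sub_le {x g q y : E} {η : ℝ}
    (hy : ‖y - q‖ ≤ ‖x - η • g - q‖) :
    2 * η * ⟪x - q, g⟫ ≤ ‖x - q‖ ^ 2 - ‖y - q‖ ^ 2 + η ^ 2 * ‖g‖ ^ 2 := by
  have := pow_le_pow_left₀ (norm_nonneg _) hy 2
  rw [norm_sub_smul_sub_sq] at this
  linarith

variable (Δ : Set E) (proj : E → E) (hproj_mem : ∀ x, proj x ∈ Δ)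
  (hproj : ∀ x, ∀ q ∈ Δ, ‖proj x - q‖ ≤ ‖x - q‖)
  (ℓ : ℕ → E → ℝ) (grad : ℕ → E → E)
  (hconvex : ∀ t, ∀ x ∈ Δ, ∀ y ∈ Δ, ℓ t x - ℓ t y ≤ ⟪x - y, grad t x⟫)
  {L : ℝ} (hgradbound : ∀ t, ∀ x ∈ Δ, ‖grad t x‖ ≤ L)
  {η : ℝ} (p : ℕ → E) (hp1 : p 1 ∈ Δ)
  (hiter : ∀ t, p (t + 1) = proj (p t - η • grad t (p t)))

include hproj_mem hp1 hiter in
theorem ogd_iterate_mem {t : ℕ} (ht : 1 ≤ t) : p t ∈ Δ := by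
  obtain ⟨n, rfl⟩ := Nat.exists_eq_add_of_le' ht
  rcases n with _ | n
  · exact hp1
  · rw [hiter]
    exact hproj_mem _

include hproj_mem hproj hconvex hgradbound hp1 hiter in
theorem ogd_step_regret_le (hη : 0 ≤ η) {t : ℕ} (ht : 1 ≤ t) {q : E} (hq : q ∈ Δ) :
    2 * η * (ℓ t (p t) - ℓ t q) ≤ ‖p t - q‖ ^ 2 - ‖p (t + 1) - q‖ ^ 2 + η ^ 2 * L ^ 2 := by
  have hpt : p t ∈ Δ := ogd_iterate_mem Δ proj hproj_mem grad p hp1 hiter ht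
  have hstep : 2 * η * ⟪p t - q, grad t (p t)⟫
      ≤ ‖p t - q‖ ^ 2 - ‖p (t + 1) - q‖ ^ 2 + η ^ 2 * ‖grad t (p t)‖ ^ 2 :=
    two_mul_inner_le_of_norm_sub_le (by rw [hiter]; exact hproj _ q hq)
  have hgrad : η ^ 2 * ‖grad t (p t)‖ ^ 2 ≤ η ^ 2 * L ^ 2 := by
    gcongr
    exact hgradbound t _ hpt
  have hloss : 2 * η * (ℓ t (p t) - ℓ t q) ≤ 2 * η * ⟪p t - q, grad t (p t)⟫ := by
    gcongr
    exact hconvex t _ hpt q hq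
  linarith

include hproj_mem hproj hconvex hgradbound hp1 hiter in
theorem ogd_regret_le (hη : 0 ≤ η) {T : ℕ} (hT : 1 ≤ T) {q : E} (hq : q ∈ Δ) :
    2 * η * ∑ t ∈ Finset.Icc 1 T, (ℓ t (p t) - ℓ t q) ≤ ‖p 1 - q‖ ^ 2 + T * (η ^ 2 * L ^ 2) := by
  have hsteps := Finset.sum_le_sum (s := Finset.Icc 1 T) fun t ht ↦
    ogd_step_regret_le Δ proj hproj_mem hproj ℓ grad hconvex hgradbound p hp1 hiter hη
      (Finset.mem_Icc.mp ht).1 hq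
  have htelescope := Finset.sum_Icc_sub hT fun t ↦ ‖p t - q‖ ^ 2
  rw [Finset.mul_sum]
  simp only [Finset.sum_add_distrib, Finset.sum_const, Nat.card_Icc, nsmul_eq_mul,
    Finset.sum_sub_distrib] at hsteps htelescope ⊢
  push_cast at hsteps
  linarith [sq_nonneg ‖p (T + 1) - q‖]

end OnlineGradientDescent

theorem stmt_3_general
    {K : ℕ} (Δ : Set (EuclideanSpace ℝ (Fin K)))
    (proj : EuclideanSpace ℝ (Fin K) → EuclideanSpace ℝ (Fin K))
    (hproj_mem : ∀ x, proj x ∈ Δ)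
    (hproj : ∀ x, ∀ p ∈ Δ, ‖proj x - p‖ ≤ ‖x - p‖)
    (T : ℕ) (hT : 1 ≤ T) (L : ℝ) (hL : 0 < L)
    (ℓ : ℕ → EuclideanSpace ℝ (Fin K) → ℝ)
    (grad : ℕ → EuclideanSpace ℝ (Fin K) → EuclideanSpace ℝ (Fin K))
    -- convexity: first-order inequality for the (differentiable) losses
    (hconvex : ∀ t, ∀ x ∈ Δ, ∀ y ∈ Δ, ℓ t x - ℓ t y ≤ ⟪x - y, grad t x⟫)
    (hgradbound : ∀ t, ∀ x ∈ Δ, ‖grad t x‖ ≤ L)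
    (η : ℝ) (hη : η = Real.sqrt (2 / T) / L)
    (p : ℕ → EuclideanSpace ℝ (Fin K))
    (hp1 : p 1 ∈ Δ)
    (hdiam : ∀ q ∈ Δ, ‖p 1 - q‖ ^ 2 ≤ 2)
    (hiter : ∀ t, p (t + 1) = proj (p t - η • grad t (p t))) :
    ∀ q ∈ Δ,
      (1 / (T : ℝ)) * ∑ t ∈ Finset.Icc 1 T, ℓ t (p t)
        - (1 / (T : ℝ)) * ∑ t ∈ Finset.Icc 1 T, ℓ t q
      ≤ Real.sqrt (2 / T) * L := by
  intro q hq
  have hT₀ : (0 : ℝ) < T := by exact_mod_cast hT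
  have hs : 0 < Real.sqrt (2 / T) := by positivity
  have hs_sq : Real.sqrt (2 / T) ^ 2 = 2 / T := Real.sq_sqrt (by positivity)
  have hη₀ : 0 < η := hη ▸ div_pos hs hL
  have hregret := ogd_regret_le Δ proj hproj_mem hproj ℓ grad hconvex hgradbound p hp1 hiter
    hη₀.le hT hq
  have hbalance : 2 + T * (η ^ 2 * L ^ 2) = 2 * η * (T * (Real.sqrt (2 / T) * L)) := by
    rw [hη]
    field_simp
    rw [hs_sq]
    field_simp
    norm_num
  rw [← mul_sub, ← Finset.sum_sub_distrib, one_div_mul_eq_div, div_le_iff₀' hT₀]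
  refine le_of_mul_le_mul_left ?_ (by positivity : 0 < 2 * η)
  linarith [hdiam q hq]

/-- Online gradient descent regret bound: with diameter bound `‖p₁ − p‖² ≤ 2`,
gradients bounded by `L`, convexity (stated via the first-order inequality), and step
size `η = √(2/T)/L`, the average regret is at most `√(2/T)·L`. -/
theorem stmt_3
    {K : ℕ} (Δ : Set (EuclideanSpace ℝ (Fin K)))
    (hne : Δ.Nonempty) (hclosed : IsClosed Δ) (hconv : Convex ℝ Δ)
    (proj : EuclideanSpace ℝ (Fin K) → EuclideanSpace ℝ (Fin K))
    (hproj_mem : ∀ x, proj x ∈ Δ)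
    (hproj : ∀ x, ∀ p ∈ Δ, ‖proj x - p‖ ≤ ‖x - p‖)
    (T : ℕ) (hT : 1 ≤ T) (L : ℝ) (hL : 0 < L)
    (ℓ : ℕ → EuclideanSpace ℝ (Fin K) → ℝ)
    (grad : ℕ → EuclideanSpace ℝ (Fin K) → EuclideanSpace ℝ (Fin K))
    -- convexity: first-order inequality for the (differentiable) losses
    (hconvex : ∀ t, ∀ x ∈ Δ, ∀ y ∈ Δ, ℓ t x - ℓ t y ≤ ⟪x - y, grad t x⟫)
    (hgradbound : ∀ t, ∀ x ∈ Δ, ‖grad t x‖ ≤ L)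
    (η : ℝ) (hη : η = Real.sqrt (2 / T) / L)
    (p : ℕ → EuclideanSpace ℝ (Fin K))
    (hp1 : p 1 ∈ Δ)
    (hdiam : ∀ q ∈ Δ, ‖p 1 - q‖ ^ 2 ≤ 2)
    (hiter : ∀ t, p (t + 1) = proj (p t - η • grad t (p t))) :
    ∀ q ∈ Δ,
      (1 / (T : ℝ)) * ∑ t ∈ Finset.Icc 1 T, ℓ t (p t)
        - (1 / (T : ℝ)) * ∑ t ∈ Finset.Icc 1 T, ℓ t q
      ≤ Real.sqrt (2 / T) * L :=
  stmt_3_general Δ proj hproj_mem hproj T hT L hL ℓ grad hconvex hgradbound η hη p hp1 hdiam hiter
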